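/- arXiv:2001.01567 — 2 statements merged into one kernel-verified Lean document; each statement's English description precedes it below -/
import Mathlib

section
/- Bielecki-norm contraction estimate for the solution operator: assume (H1)–(H2), let ζ > 0 satisfy ψ'(s) ≥ ζ for all s ∈ [0,b], and let δ ≥ 0. Then for all u, v ∈ C([−r,b]) with u = v = φ on [−r,0] and restrictions to (0,b] in C_{1−γ;ψ}[0,b], one has ‖G_f u − G_f v‖_B ≤ 2L_f e^{δ(ψ(b)−ψ(0))} [ (Γ(γ)/Γ(γ+α)) (ψ(b)−ψ(0))^{α} + (L_h/(ζγ)) (Γ(γ+1)/Γ(γ+α+1)) (ψ(b)−ψ(0))^{α+1} ] · ‖u − v‖_B. -/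
open Real MeasureTheory Set Filter Topology

/-- `F_{u,g,h}(s) = f(s, u(s), u(g(s)), ∫₀ˢ h(s,τ,u(τ),u(g(τ))) dτ)`. -/
noncomputable def Ffun (f h : ℝ → ℝ → ℝ → ℝ → ℝ) (g : ℝ → ℝ) (u : ℝ → ℝ) (s : ℝ) : ℝ :=
  f s (u s) (u (g s)) (∫ τ in (0:ℝ)..s, h s τ (u τ) (u (g τ)))

/-- The solution operator `G_f`: `G_f u(t) = φ(t)` for `t ≤ 0` and
`G_f u(t) = ((ψ(t)-ψ(0))^{γ-1}/Γ(γ)) u₀ + (1/Γ(α)) ∫₀ᵗ ψ'(s)(ψ(t)-ψ(s))^{α-1} F_{u,g,h}(s) ds`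
for `t > 0`. -/
noncomputable def Gf (ψ ψ' : ℝ → ℝ) (α γ u₀ : ℝ) (φ : ℝ → ℝ)
    (f h : ℝ → ℝ → ℝ → ℝ → ℝ) (g : ℝ → ℝ) (u : ℝ → ℝ) (t : ℝ) : ℝ :=
  if t ≤ 0 then φ t
  else (ψ t - ψ 0) ^ (γ - 1) / Real.Gamma γ * u₀
    + (Real.Gamma α)⁻¹ * ∫ s in (0:ℝ)..t, ψ' s * (ψ t - ψ s) ^ (α - 1) * Ffun f h g u s

/-- The Bielecki norm
`‖ω‖_B = sup_{t∈(0,b]} e^{-δ(ψ(t)-ψ(0))} |(ψ(t)-ψ(0))^{1-γ} ω(t)|`. -/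
noncomputable def bnorm (ψ : ℝ → ℝ) (γ δ b : ℝ) (ω : ℝ → ℝ) : ℝ :=
  sSup ((fun t => Real.exp (-δ * (ψ t - ψ 0)) * |(ψ t - ψ 0) ^ (1 - γ) * ω t|) '' Ioc 0 b)

open ProbabilityTheory (beta)

/-!
Because `u = v = φ` on `[-r, 0]` and `g` maps into `[-r, 0]`, the delayed arguments cancel, so the
Lipschitz bounds give `|F_u(s) - F_v(s)| ≤ L_f (|u(s) - v(s)| + L_h ∫₀ˢ |u - v|)`. The Bielecki
norm bounds `|u(τ) - v(τ)|` by `e^{δ(ψ(b)-ψ(0))} ‖u - v‖_B (ψ(τ)-ψ(0))^{γ-1}`, and since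
`ψ(τ) - ψ(0) ≥ ζ τ` the memory integral contributes at most `(ψ(s)-ψ(0))^γ / (ζ γ)` times the
same constant. The substitution `x = ψ(s)` turns the fractional integrals of `(ψ(s)-ψ(0))^{γ-1}`
and `(ψ(s)-ψ(0))^γ` into Beta integrals, which produce the Gamma quotients; the weight
`e^{-δ(ψ(t)-ψ(0))} ≤ 1` is simply dropped.
-/

theorem integral_rpow_mul_rpow_sub {p q a : ℝ} (hp : 0 < p) (hq : 0 < q) (ha : 0 < a) :
    ∫ x in (0:ℝ)..a, x ^ (p - 1) * (a - x) ^ (q - 1) = a ^ (p + q - 1) * beta p q := by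
  have hβ : Complex.betaIntegral p q = (beta p q : ℂ) := by
    rw [Complex.betaIntegral_eq_Gamma_mul_div _ _ (by simpa) (by simpa), beta]
    push_cast [← Complex.Gamma_ofReal]
    rfl
  apply Complex.ofReal_injective
  rw [← intervalIntegral.integral_ofReal, Complex.ofReal_mul, ← hβ,
    Complex.ofReal_cpow ha.le, Complex.ofReal_sub, Complex.ofReal_add, Complex.ofReal_one,
    ← Complex.betaIntegral_scaled p q ha]
  refine intervalIntegral.integral_congr fun x hx => ?_
  rw [uIcc_of_le ha.le] at hx
  rw [Complex.ofReal_mul, Complex.ofReal_cpow hx.1, Complex.ofReal_cpow (sub_nonneg.2 hx.2)]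
  push_cast
  rfl

theorem integral_deriv_mul_rpow_sub_mul_rpow_sub {ψ ψ' : ℝ → ℝ} {a t p q : ℝ} (hat : a ≤ t)
    (hψc : ContinuousOn ψ (Icc a t)) (hψ : ∀ x ∈ Ioo a t, HasDerivAt ψ (ψ' x) x)
    (hψ' : ∀ x ∈ Ioo a t, 0 ≤ ψ' x) (hψat : ψ a < ψ t) (hp : 0 < p) (hq : 0 < q) :
    ∫ s in a..t, ψ' s * (ψ t - ψ s) ^ (q - 1) * (ψ s - ψ a) ^ (p - 1)
      = (ψ t - ψ a) ^ (p + q - 1) * beta p q := by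
  have hcov := integral_Icc_deriv_smul_of_deriv_nonneg hψc hψ hψ' hat
    (g := fun y => (y - ψ a) ^ (p - 1) * (ψ t - ψ a - (y - ψ a)) ^ (q - 1))
  simp only [smul_eq_mul, integral_Icc_eq_integral_Ioc, ← intervalIntegral.integral_of_le hat,
    ← intervalIntegral.integral_of_le hψat.le, intervalIntegral.integral_comp_sub_right
      (fun y => y ^ (p - 1) * (ψ t - ψ a - y) ^ (q - 1)), sub_self] at hcov
  rw [← integral_rpow_mul_rpow_sub hp hq (sub_pos.2 hψat), ← hcov]
  refine intervalIntegral.integral_congr fun s _ => ?_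
  simp only [sub_sub_sub_cancel_right]
  ring

theorem intervalIntegrable_deriv_mul_rpow_sub_mul_rpow_sub {ψ ψ' : ℝ → ℝ} {a t p q : ℝ}
    (hat : a ≤ t) (hψc : ContinuousOn ψ (Icc a t)) (hψ : ∀ x ∈ Ioo a t, HasDerivAt ψ (ψ' x) x)
    (hψ' : ∀ x ∈ Ioo a t, 0 ≤ ψ' x) (hψat : ψ a < ψ t) (hp : 0 < p) (hq : 0 < q) :
    IntervalIntegrable (fun s => ψ' s * (ψ t - ψ s) ^ (q - 1) * (ψ s - ψ a) ^ (p - 1))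
      volume a t := by
  -- A non-integrable function has integral `0`, whereas this one has a positive integral.
  by_contra hI
  have h := integral_deriv_mul_rpow_sub_mul_rpow_sub hat hψc hψ hψ' hψat hp hq
  rw [intervalIntegral.integral_undef hI] at h
  have : 0 < (ψ t - ψ a) ^ (p + q - 1) * beta p q :=
    mul_pos (rpow_pos_of_pos (sub_pos.2 hψat) _) (ProbabilityTheory.beta_pos hp hq)
  exact this.ne' h.symm

theorem intervalIntegrable_deriv_mul_rpow_sub {ψ ψ' : ℝ → ℝ} {a t q : ℝ}
    (hat : a ≤ t) (hψc : ContinuousOn ψ (Icc a t)) (hψ : ∀ x ∈ Ioo a t, HasDerivAt ψ (ψ' x) x)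
    (hψ' : ∀ x ∈ Ioo a t, 0 ≤ ψ' x) (hψat : ψ a < ψ t) (hq : 0 < q) :
    IntervalIntegrable (fun s => ψ' s * (ψ t - ψ s) ^ (q - 1)) volume a t := by
  simpa using intervalIntegrable_deriv_mul_rpow_sub_mul_rpow_sub hat hψc hψ hψ' hψat one_pos hq

theorem integral_abs_le_of_abs_le_rpow {w D : ℝ → ℝ} {C ζ γ s : ℝ} (hs : 0 < s) (hζ : 0 < ζ)
    (hγ0 : 0 < γ) (hγ1 : γ ≤ 1) (hC : 0 ≤ C) (hw : IntervalIntegrable w volume 0 s)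
    (hD : ∀ τ ∈ Ioc 0 s, ζ * τ ≤ D τ) (hwD : ∀ τ ∈ Ioc 0 s, |w τ| ≤ C * D τ ^ (γ - 1)) :
    ∫ τ in (0:ℝ)..s, |w τ| ≤ C * (D s ^ γ / (ζ * γ)) := by
  calc ∫ τ in (0:ℝ)..s, |w τ| ≤ ∫ τ in (0:ℝ)..s, C * ζ ^ (γ - 1) * τ ^ (γ - 1) := by
        refine intervalIntegral.integral_mono_on_of_le_Ioo hs.le hw.abs
          ((intervalIntegral.intervalIntegrable_rpow' (by linarith)).const_mul _)
          fun τ hτ => (hwD τ ⟨hτ.1, hτ.2.le⟩).trans ?_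
        rw [mul_assoc, ← mul_rpow hζ.le hτ.1.le]
        gcongr ?_ * ?_
        exact rpow_le_rpow_of_nonpos (mul_pos hζ hτ.1) (hD τ ⟨hτ.1, hτ.2.le⟩) (by linarith)
    _ = C * ((ζ * s) ^ γ / (ζ * γ)) := by
        rw [intervalIntegral.integral_const_mul, integral_rpow (Or.inl (by linarith)),
          sub_add_cancel, zero_rpow hγ0.ne', sub_zero, mul_rpow hζ.le hs.le, rpow_sub_one hζ.ne']
        field_simp
    _ ≤ C * (D s ^ γ / (ζ * γ)) := by
        gcongr
        exact hD s ⟨hs, le_rfl⟩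

theorem mul_sub_le_image_sub_of_le_hasDerivAt {ψ ψ' : ℝ → ℝ} {a b ζ : ℝ}
    (hψc : ContinuousOn ψ (Icc a b)) (hψ : ∀ x ∈ Ioo a b, HasDerivAt ψ (ψ' x) x)
    (hζ : ∀ x ∈ Ioo a b, ζ ≤ ψ' x) {x y : ℝ} (hx : x ∈ Icc a b) (hy : y ∈ Icc a b)
    (hxy : x ≤ y) : ζ * (y - x) ≤ ψ y - ψ x := by
  refine (convex_Icc a b).mul_sub_le_image_sub_of_le_deriv hψc ?_ ?_ x hx y hy hxy
  · rw [interior_Icc]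
    exact fun z hz => (hψ z hz).differentiableAt.differentiableWithinAt
  · rw [interior_Icc]
    exact fun z hz => (hψ z hz).deriv ▸ hζ z hz

theorem abs_integral_deriv_mul_rpow_sub_mul_sub_le {ψ ψ' F₁ F₂ : ℝ → ℝ} {a t α γ C c : ℝ}
    (hat : a ≤ t) (hψc : ContinuousOn ψ (Icc a t)) (hψ : ∀ x ∈ Ioo a t, HasDerivAt ψ (ψ' x) x)
    (hψ' : ∀ x ∈ Ioo a t, 0 ≤ ψ' x) (hmono : MonotoneOn ψ (Icc a t)) (hψat : ψ a < ψ t)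
    (hα : 0 < α) (hγ : 0 < γ) (hF₁ : ContinuousOn F₁ (Icc a t))
    (hF₂ : ContinuousOn F₂ (Icc a t))
    (hF : ∀ s ∈ Ioo a t, |F₁ s - F₂ s| ≤ C * ((ψ s - ψ a) ^ (γ - 1) + c * (ψ s - ψ a) ^ γ)) :
    |(∫ s in a..t, ψ' s * (ψ t - ψ s) ^ (α - 1) * F₁ s)
        - ∫ s in a..t, ψ' s * (ψ t - ψ s) ^ (α - 1) * F₂ s|
      ≤ C * ((ψ t - ψ a) ^ (γ + α - 1) * beta γ α
        + c * ((ψ t - ψ a) ^ (γ + α) * beta (γ + 1) α)) := by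
  have hk := intervalIntegrable_deriv_mul_rpow_sub hat hψc hψ hψ' hψat hα
  rw [← uIcc_of_le hat] at hF₁ hF₂
  have hγ₀ := intervalIntegrable_deriv_mul_rpow_sub_mul_rpow_sub hat hψc hψ hψ' hψat hγ hα
  have hγ₁ := intervalIntegrable_deriv_mul_rpow_sub_mul_rpow_sub hat hψc hψ hψ' hψat
    (by linarith : 0 < γ + 1) hα
  have hval₀ := integral_deriv_mul_rpow_sub_mul_rpow_sub hat hψc hψ hψ' hψat hγ hα
  have hval₁ := integral_deriv_mul_rpow_sub_mul_rpow_sub hat hψc hψ hψ' hψat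
    (by linarith : 0 < γ + 1) hα
  simp only [add_sub_cancel_right] at hγ₁ hval₁
  rw [← intervalIntegral.integral_sub (hk.mul_continuousOn hF₁) (hk.mul_continuousOn hF₂)]
  calc _ ≤ ∫ s in a..t, |ψ' s * (ψ t - ψ s) ^ (α - 1) * F₁ s
          - ψ' s * (ψ t - ψ s) ^ (α - 1) * F₂ s| :=
        intervalIntegral.abs_integral_le_integral_abs hat
    _ ≤ ∫ s in a..t, (C * (ψ' s * (ψ t - ψ s) ^ (α - 1) * (ψ s - ψ a) ^ (γ - 1))
          + C * c * (ψ' s * (ψ t - ψ s) ^ (α - 1) * (ψ s - ψ a) ^ γ)) := by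
        refine intervalIntegral.integral_mono_on_of_le_Ioo hat
          ((hk.mul_continuousOn hF₁).sub (hk.mul_continuousOn hF₂)).abs
          ((hγ₀.const_mul C).add (hγ₁.const_mul (C * c))) fun s hs => ?_
        have hs' := Ioo_subset_Icc_self hs
        have hker : 0 ≤ ψ' s * (ψ t - ψ s) ^ (α - 1) :=
          mul_nonneg (hψ' s hs) (rpow_nonneg (sub_nonneg.2 (hmono hs' ⟨hat, le_rfl⟩ hs'.2)) _)
        rw [← mul_sub, abs_mul, abs_of_nonneg hker]
        calc _ ≤ ψ' s * (ψ t - ψ s) ^ (α - 1)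
              * (C * ((ψ s - ψ a) ^ (γ - 1) + c * (ψ s - ψ a) ^ γ)) := by
              gcongr; exact hF s hs
          _ = _ := by ring
    _ = _ := by
        rw [intervalIntegral.integral_add (hγ₀.const_mul C) (hγ₁.const_mul (C * c)),
          intervalIntegral.integral_const_mul, intervalIntegral.integral_const_mul, hval₀, hval₁,
          show γ + 1 + α - 1 = γ + α by ring]
        ring

section Bielecki

variable {ψ : ℝ → ℝ} {γ δ b : ℝ} {ω : ℝ → ℝ}

theorem bnorm_nonneg : 0 ≤ bnorm ψ γ δ b ω :=
  Real.sSup_nonneg (forall_mem_image.2 fun _ _ => by positivity)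

theorem bnorm_le {C : ℝ} (hb : 0 < b) (hδ : 0 ≤ δ) (hψ : ∀ t ∈ Ioc 0 b, ψ 0 ≤ ψ t)
    (h : ∀ t ∈ Ioc 0 b, (ψ t - ψ 0) ^ (1 - γ) * |ω t| ≤ C) :
    bnorm ψ γ δ b ω ≤ C := by
  refine csSup_le ((nonempty_Ioc.2 hb).image _) (forall_mem_image.2 fun t ht => ?_)
  have hΔ : 0 ≤ ψ t - ψ 0 := sub_nonneg.2 (hψ t ht)
  rw [abs_mul, abs_of_nonneg (rpow_nonneg hΔ _)]
  exact (mul_le_of_le_one_left (by positivity) (exp_le_one_iff.2 (by nlinarith))).trans (h t ht)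

theorem abs_le_bnorm (hψ : ContinuousOn ψ (Icc 0 b))
    (hω : ∃ W : ℝ → ℝ, ContinuousOn W (Icc 0 b) ∧
      ∀ t ∈ Ioc 0 b, W t = (ψ t - ψ 0) ^ (1 - γ) * ω t)
    (hδ : 0 ≤ δ) {t : ℝ} (ht : t ∈ Ioc 0 b) (hψt : ψ 0 < ψ t) (hψb : ψ t ≤ ψ b) :
    |ω t| ≤ exp (δ * (ψ b - ψ 0)) * bnorm ψ γ δ b ω * (ψ t - ψ 0) ^ (γ - 1) := by
  obtain ⟨W, hWc, hW⟩ := hω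
  have hbdd : BddAbove ((fun t => exp (-δ * (ψ t - ψ 0)) * |(ψ t - ψ 0) ^ (1 - γ) * ω t|) ''
      Ioc 0 b) := by
    have hc : ContinuousOn (fun t => exp (-δ * (ψ t - ψ 0)) * |W t|) (Icc 0 b) := by fun_prop
    refine ((isCompact_Icc.image_of_continuousOn hc).bddAbove).mono ?_
    rintro _ ⟨τ, hτ, rfl⟩
    exact ⟨τ, Ioc_subset_Icc_self hτ, by simp only [hW τ hτ]⟩
  have hΔ : 0 < ψ t - ψ 0 := sub_pos.2 hψt
  have hle := le_csSup hbdd (mem_image_of_mem _ ht)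
  rw [abs_mul, abs_of_pos (rpow_pos_of_pos hΔ _)] at hle
  calc |ω t| = exp (δ * (ψ t - ψ 0)) * (exp (-δ * (ψ t - ψ 0))
        * ((ψ t - ψ 0) ^ (1 - γ) * |ω t|)) * (ψ t - ψ 0) ^ (γ - 1) := by
        rw [neg_mul, exp_neg, rpow_sub hΔ, rpow_sub hΔ, rpow_one]
        field_simp
    _ ≤ _ := by gcongr; exact hle

end Bielecki

theorem continuousOn_parametric_intervalIntegral_Icc {K : ℝ → ℝ → ℝ} {a b : ℝ}
    (hK : ContinuousOn (Function.uncurry K) (Icc a b ×ˢ Icc a b)) :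
    ContinuousOn (fun s => ∫ τ in a..s, K s τ) (Icc a b) := by
  rcases lt_or_ge b a with hba | hab
  · simp [Icc_eq_empty_of_lt hba]
  set proj : ℝ → ℝ := fun x => projIcc a b hab x
  have hproj : ∀ x ∈ Icc a b, proj x = x := fun x hx => by simp [proj, projIcc_of_mem hab hx]
  have hK' : Continuous (Function.uncurry fun s τ => K (proj s) (proj τ)) :=
    hK.comp_continuous (f := fun p : ℝ × ℝ => (proj p.1, proj p.2)) (by fun_prop)
      fun p => ⟨(projIcc a b hab p.1).2, (projIcc a b hab p.2).2⟩
  refine (intervalIntegral.continuous_parametric_intervalIntegral_of_continuous (μ := volume)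
    (a₀ := a) hK' continuous_id).continuousOn.congr fun s hs => ?_
  refine intervalIntegral.integral_congr fun τ hτ => ?_
  rw [uIcc_of_le hs.1] at hτ
  simp only [hproj s hs, hproj τ ⟨hτ.1, hτ.2.trans hs.2⟩]

section Ffun

variable {b : ℝ} {f h : ℝ → ℝ → ℝ → ℝ → ℝ} {g u v : ℝ → ℝ}

theorem continuousOn_memory_kernel
    (hh : ContinuousOn (fun p : ℝ × ℝ × ℝ × ℝ => h p.1 p.2.1 p.2.2.1 p.2.2.2)
      (Icc (0:ℝ) b ×ˢ Icc (0:ℝ) b ×ˢ (univ : Set (ℝ × ℝ))))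
    (hu : ContinuousOn u (Icc 0 b)) (hug : ContinuousOn (fun τ => u (g τ)) (Icc 0 b)) :
    ContinuousOn (Function.uncurry fun s τ => h s τ (u τ) (u (g τ))) (Icc 0 b ×ˢ Icc 0 b) :=
  hh.comp (continuousOn_fst.prodMk (continuousOn_snd.prodMk
      ((hu.comp continuousOn_snd fun _ hp => hp.2).prodMk
        (hug.comp continuousOn_snd fun _ hp => hp.2))))
    fun _ hp => ⟨hp.1, hp.2, trivial⟩

theorem continuousOn_Ffun
    (hf : ContinuousOn (fun p : ℝ × ℝ × ℝ × ℝ => f p.1 p.2.1 p.2.2.1 p.2.2.2)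
      (Icc (0:ℝ) b ×ˢ (univ : Set (ℝ × ℝ × ℝ))))
    (hh : ContinuousOn (fun p : ℝ × ℝ × ℝ × ℝ => h p.1 p.2.1 p.2.2.1 p.2.2.2)
      (Icc (0:ℝ) b ×ˢ Icc (0:ℝ) b ×ˢ (univ : Set (ℝ × ℝ))))
    (hu : ContinuousOn u (Icc 0 b)) (hug : ContinuousOn (fun τ => u (g τ)) (Icc 0 b)) :
    ContinuousOn (Ffun f h g u) (Icc 0 b) :=
  hf.comp (continuousOn_id.prodMk (hu.prodMk (hug.prodMk
      (continuousOn_parametric_intervalIntegral_Icc (continuousOn_memory_kernel hh hu hug)))))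
    fun _ hs => ⟨hs, trivial⟩

theorem abs_Ffun_sub_le {Lf Lh s : ℝ} (hs : s ∈ Icc 0 b) (hLf : 0 ≤ Lf)
    (hh : ContinuousOn (fun p : ℝ × ℝ × ℝ × ℝ => h p.1 p.2.1 p.2.2.1 p.2.2.2)
      (Icc (0:ℝ) b ×ˢ Icc (0:ℝ) b ×ˢ (univ : Set (ℝ × ℝ))))
    (hfLip : ∀ t ∈ Icc (0:ℝ) b, ∀ u₁ u₂ u₃ v₁ v₂ v₃ : ℝ,
      |f t u₁ u₂ u₃ - f t v₁ v₂ v₃| ≤ Lf * (|u₁ - v₁| + |u₂ - v₂| + |u₃ - v₃|))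
    (hhLip : ∀ t ∈ Icc (0:ℝ) b, ∀ s ∈ Icc (0:ℝ) b, ∀ u₁ u₂ v₁ v₂ : ℝ,
      |h t s u₁ u₂ - h t s v₁ v₂| ≤ Lh * (|u₁ - v₁| + |u₂ - v₂|))
    (hu : ContinuousOn u (Icc 0 b)) (hug : ContinuousOn (fun τ => u (g τ)) (Icc 0 b))
    (hv : ContinuousOn v (Icc 0 b)) (hvg : ContinuousOn (fun τ => v (g τ)) (Icc 0 b))
    (hg : ∀ τ ∈ Icc 0 b, u (g τ) = v (g τ)) :
    |Ffun f h g u s - Ffun f h g v s| ≤ Lf * (|u s - v s| + Lh * ∫ τ in 0..s, |u τ - v τ|) := by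
  have hsub : uIcc 0 s ⊆ Icc 0 b := by
    rw [uIcc_of_le hs.1]; exact Icc_subset_Icc_right hs.2
  have hslice : ∀ {w : ℝ → ℝ}, ContinuousOn w (Icc 0 b) →
      ContinuousOn (fun τ => w (g τ)) (Icc 0 b) →
      IntervalIntegrable (fun τ => h s τ (w τ) (w (g τ))) volume 0 s := fun hw hwg =>
    ((continuousOn_memory_kernel hh hw hwg).comp (continuousOn_const.prodMk continuousOn_id)
      fun τ hτ => ⟨hs, hsub hτ⟩).intervalIntegrable
  have hmemory : |(∫ τ in 0..s, h s τ (u τ) (u (g τ))) - ∫ τ in 0..s, h s τ (v τ) (v (g τ))|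
      ≤ Lh * ∫ τ in 0..s, |u τ - v τ| := by
    rw [← intervalIntegral.integral_sub (hslice hu hug) (hslice hv hvg),
      ← intervalIntegral.integral_const_mul]
    refine (intervalIntegral.abs_integral_le_integral_abs hs.1).trans
      (intervalIntegral.integral_mono_on hs.1 ((hslice hu hug).sub (hslice hv hvg)).abs
        (((hu.sub hv).mono hsub).intervalIntegrable.abs.const_mul Lh) fun τ hτ => ?_)
    have hτ' : τ ∈ Icc 0 b := hsub (uIcc_of_le hs.1 ▸ hτ)
    simpa [hg τ hτ'] using hhLip s hs τ hτ' (u τ) (u (g τ)) (v τ) (v (g τ))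
  calc |Ffun f h g u s - Ffun f h g v s|
      ≤ Lf * (|u s - v s| + |u (g s) - v (g s)| + |(∫ τ in 0..s, h s τ (u τ) (u (g τ)))
          - ∫ τ in 0..s, h s τ (v τ) (v (g τ))|) := hfLip s hs _ _ _ _ _ _
    _ ≤ Lf * (|u s - v s| + Lh * ∫ τ in 0..s, |u τ - v τ|) := by
        rw [hg s hs, sub_self, abs_zero, add_zero]
        gcongr

theorem abs_Ffun_sub_le_rpow {ψ : ℝ → ℝ} {Lf Lh K ζ γ s : ℝ} (hs : s ∈ Ioc 0 b)
    (hLf : 0 ≤ Lf) (hLh : 0 ≤ Lh) (hK : 0 ≤ K) (hζ : 0 < ζ) (hγ0 : 0 < γ) (hγ1 : γ ≤ 1)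
    (hh : ContinuousOn (fun p : ℝ × ℝ × ℝ × ℝ => h p.1 p.2.1 p.2.2.1 p.2.2.2)
      (Icc (0:ℝ) b ×ˢ Icc (0:ℝ) b ×ˢ (univ : Set (ℝ × ℝ))))
    (hfLip : ∀ t ∈ Icc (0:ℝ) b, ∀ u₁ u₂ u₃ v₁ v₂ v₃ : ℝ,
      |f t u₁ u₂ u₃ - f t v₁ v₂ v₃| ≤ Lf * (|u₁ - v₁| + |u₂ - v₂| + |u₃ - v₃|))
    (hhLip : ∀ t ∈ Icc (0:ℝ) b, ∀ s ∈ Icc (0:ℝ) b, ∀ u₁ u₂ v₁ v₂ : ℝ,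
      |h t s u₁ u₂ - h t s v₁ v₂| ≤ Lh * (|u₁ - v₁| + |u₂ - v₂|))
    (hu : ContinuousOn u (Icc 0 b)) (hug : ContinuousOn (fun τ => u (g τ)) (Icc 0 b))
    (hv : ContinuousOn v (Icc 0 b)) (hvg : ContinuousOn (fun τ => v (g τ)) (Icc 0 b))
    (hg : ∀ τ ∈ Icc 0 b, u (g τ) = v (g τ)) (hlow : ∀ τ ∈ Ioc 0 b, ζ * τ ≤ ψ τ - ψ 0)
    (huv : ∀ τ ∈ Ioc 0 b, |u τ - v τ| ≤ K * (ψ τ - ψ 0) ^ (γ - 1)) :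
    |Ffun f h g u s - Ffun f h g v s|
      ≤ Lf * K * ((ψ s - ψ 0) ^ (γ - 1) + Lh / (ζ * γ) * (ψ s - ψ 0) ^ γ) := by
  have hsub : Ioc 0 s ⊆ Ioc 0 b := Ioc_subset_Ioc_right hs.2
  have hI := integral_abs_le_of_abs_le_rpow hs.1 hζ hγ0 hγ1 hK
    (((hu.sub hv).mono (Icc_subset_Icc_right hs.2)).intervalIntegrable_of_Icc hs.1.le)
    (fun τ hτ => hlow τ (hsub hτ)) fun τ hτ => huv τ (hsub hτ)
  calc _ ≤ Lf * (|u s - v s| + Lh * ∫ τ in 0..s, |u τ - v τ|) :=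
        abs_Ffun_sub_le (Ioc_subset_Icc_self hs) hLf hh hfLip hhLip hu hug hv hvg hg
    _ ≤ Lf * (K * (ψ s - ψ 0) ^ (γ - 1) + Lh * (K * ((ψ s - ψ 0) ^ γ / (ζ * γ)))) := by
        gcongr
        exacts [huv s hs, hI]
    _ = _ := by ring

end Ffun

theorem rpow_mul_abs_Gf_sub_le {ψ ψ' φ : ℝ → ℝ} {f h : ℝ → ℝ → ℝ → ℝ → ℝ} {g u v : ℝ → ℝ}
    {b t α γ u₀ C c : ℝ} (ht : t ∈ Ioc 0 b) (hψc : ContinuousOn ψ (Icc 0 b))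
    (hψ : ∀ x ∈ Ioo 0 b, HasDerivAt ψ (ψ' x) x) (hψ' : ∀ x ∈ Ioo 0 b, 0 ≤ ψ' x)
    (hmono : MonotoneOn ψ (Icc 0 b)) (hψt : ψ 0 < ψ t) (hα : 0 < α) (hγ : 0 < γ)
    (hFu : ContinuousOn (Ffun f h g u) (Icc 0 b)) (hFv : ContinuousOn (Ffun f h g v) (Icc 0 b))
    (hF : ∀ s ∈ Ioc 0 b, |Ffun f h g u s - Ffun f h g v s|
      ≤ C * ((ψ s - ψ 0) ^ (γ - 1) + c * (ψ s - ψ 0) ^ γ)) :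
    (ψ t - ψ 0) ^ (1 - γ) * |Gf ψ ψ' α γ u₀ φ f h g u t - Gf ψ ψ' α γ u₀ φ f h g v t|
      ≤ C * ((Gamma γ / Gamma (γ + α)) * (ψ t - ψ 0) ^ α
        + c * (Gamma (γ + 1) / Gamma (γ + α + 1)) * (ψ t - ψ 0) ^ (α + 1)) := by
  have hsub : Icc 0 t ⊆ Icc 0 b := Icc_subset_Icc_right ht.2
  have hIoo : Ioo 0 t ⊆ Ioo 0 b := Ioo_subset_Ioo_right ht.2
  have hdiff := abs_integral_deriv_mul_rpow_sub_mul_sub_le ht.1.le (hψc.mono hsub)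
    (fun x hx => hψ x (hIoo hx)) (fun x hx => hψ' x (hIoo hx)) (hmono.mono hsub) hψt hα hγ
    (hFu.mono hsub) (hFv.mono hsub) fun s hs => hF s ⟨hs.1, hs.2.le.trans ht.2⟩
  have hΔ : 0 < ψ t - ψ 0 := sub_pos.2 hψt
  have hΓα : 0 < Gamma α := Gamma_pos_of_pos hα
  have e₀ : (ψ t - ψ 0) ^ (1 - γ) * (ψ t - ψ 0) ^ (γ + α - 1) = (ψ t - ψ 0) ^ α := by
    rw [← rpow_add hΔ]; ring_nf
  have e₁ : (ψ t - ψ 0) ^ (1 - γ) * (ψ t - ψ 0) ^ (γ + α) = (ψ t - ψ 0) ^ (α + 1) := by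
    rw [← rpow_add hΔ]; ring_nf
  have hGf : Gf ψ ψ' α γ u₀ φ f h g u t - Gf ψ ψ' α γ u₀ φ f h g v t
      = (Gamma α)⁻¹ * ((∫ s in 0..t, ψ' s * (ψ t - ψ s) ^ (α - 1) * Ffun f h g u s)
        - ∫ s in 0..t, ψ' s * (ψ t - ψ s) ^ (α - 1) * Ffun f h g v s) := by
    simp only [Gf, if_neg (not_le.2 ht.1)]
    ring
  rw [hGf, abs_mul, abs_of_pos (inv_pos.2 hΓα)]
  calc _ ≤ (ψ t - ψ 0) ^ (1 - γ) * ((Gamma α)⁻¹ * (C * ((ψ t - ψ 0) ^ (γ + α - 1) * beta γ α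
          + c * ((ψ t - ψ 0) ^ (γ + α) * beta (γ + 1) α)))) := by gcongr
    _ = C * ((Gamma γ / Gamma (γ + α)) * ((ψ t - ψ 0) ^ (1 - γ) * (ψ t - ψ 0) ^ (γ + α - 1))
          * (Gamma α * (Gamma α)⁻¹) + c * (Gamma (γ + 1) / Gamma (γ + α + 1))
          * ((ψ t - ψ 0) ^ (1 - γ) * (ψ t - ψ 0) ^ (γ + α)) * (Gamma α * (Gamma α)⁻¹)) := by
        simp only [beta, add_right_comm γ 1 α]
        ring
    _ = _ := by rw [e₀, e₁, mul_inv_cancel₀ hΓα.ne']; ring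

theorem Gf_bielecki_contraction_estimate_general
    (b r : ℝ) (hb : 0 < b) (hr : 0 < r) (ψ ψ' : ℝ → ℝ)
    (hψ : ∀ t ∈ Icc (0:ℝ) b, HasDerivWithinAt ψ (ψ' t) (Icc (0:ℝ) b) t)
    (hψ'pos : ∀ t ∈ Icc (0:ℝ) b, 0 < ψ' t)
    (hψmono : StrictMonoOn ψ (Icc (0:ℝ) b))
    (α β γ : ℝ) (hα0 : 0 < α) (hα1 : α < 1) (hβ0 : 0 ≤ β) (hβ1 : β ≤ 1)
    (hγ : γ = α + β * (1 - α)) (u₀ : ℝ)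
    (φ : ℝ → ℝ)
    (f h : ℝ → ℝ → ℝ → ℝ → ℝ) (g : ℝ → ℝ)
    -- (H1)
    (hgc : ContinuousOn g (Icc (0:ℝ) b))
    (hgmem : ∀ t ∈ Icc (0:ℝ) b, g t ∈ Icc (-r) 0)
    -- (H2)
    (hf : ContinuousOn (fun p : ℝ × ℝ × ℝ × ℝ => f p.1 p.2.1 p.2.2.1 p.2.2.2)
      (Icc (0:ℝ) b ×ˢ (univ : Set (ℝ × ℝ × ℝ))))
    (hh : ContinuousOn (fun p : ℝ × ℝ × ℝ × ℝ => h p.1 p.2.1 p.2.2.1 p.2.2.2)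
      (Icc (0:ℝ) b ×ˢ Icc (0:ℝ) b ×ˢ (univ : Set (ℝ × ℝ))))
    (Lf Lh : ℝ) (hLf : 0 < Lf) (hLh : 0 < Lh)
    (hfLip : ∀ t ∈ Icc (0:ℝ) b, ∀ u₁ u₂ u₃ v₁ v₂ v₃ : ℝ,
      |f t u₁ u₂ u₃ - f t v₁ v₂ v₃| ≤ Lf * (|u₁ - v₁| + |u₂ - v₂| + |u₃ - v₃|))
    (hhLip : ∀ t ∈ Icc (0:ℝ) b, ∀ s ∈ Icc (0:ℝ) b, ∀ u₁ u₂ v₁ v₂ : ℝ,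
      |h t s u₁ u₂ - h t s v₁ v₂| ≤ Lh * (|u₁ - v₁| + |u₂ - v₂|))
    -- ζ is a positive lower bound for ψ', δ is the Bielecki parameter
    (ζ : ℝ) (hζ : 0 < ζ) (hζψ : ∀ s ∈ Icc (0:ℝ) b, ζ ≤ ψ' s)
    (δ : ℝ) (hδ : 0 ≤ δ)
    -- u, v as in the statement
    (u v : ℝ → ℝ)
    (hu : ContinuousOn u (Icc (-r) b)) (hv : ContinuousOn v (Icc (-r) b))
    (huφ : ∀ t ∈ Icc (-r) 0, u t = φ t) (hvφ : ∀ t ∈ Icc (-r) 0, v t = φ t)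
    (huw : ∃ W : ℝ → ℝ, ContinuousOn W (Icc (0:ℝ) b) ∧
      ∀ t ∈ Ioc (0:ℝ) b, W t = (ψ t - ψ 0) ^ (1 - γ) * u t)
    (hvw : ∃ W : ℝ → ℝ, ContinuousOn W (Icc (0:ℝ) b) ∧
      ∀ t ∈ Ioc (0:ℝ) b, W t = (ψ t - ψ 0) ^ (1 - γ) * v t) :
    bnorm ψ γ δ b (fun t => Gf ψ ψ' α γ u₀ φ f h g u t - Gf ψ ψ' α γ u₀ φ f h g v t)
      ≤ 2 * Lf * Real.exp (δ * (ψ b - ψ 0))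
          * ((Real.Gamma γ / Real.Gamma (γ + α)) * (ψ b - ψ 0) ^ α
            + (Lh / (ζ * γ)) * (Real.Gamma (γ + 1) / Real.Gamma (γ + α + 1))
              * (ψ b - ψ 0) ^ (α + 1))
        * bnorm ψ γ δ b (fun t => u t - v t) := by
  have hγ0 : 0 < γ := by nlinarith
  have hγ1 : γ ≤ 1 := by nlinarith
  have hψc : ContinuousOn ψ (Icc 0 b) := fun x hx => (hψ x hx).continuousWithinAt
  have hψd : ∀ x ∈ Ioo 0 b, HasDerivAt ψ (ψ' x) x := fun x hx =>
    (hψ x (Ioo_subset_Icc_self hx)).hasDerivAt (Icc_mem_nhds hx.1 hx.2)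
  have hψ0 : ∀ t ∈ Ioc 0 b, ψ 0 < ψ t := fun t ht =>
    hψmono ⟨le_rfl, hb.le⟩ (Ioc_subset_Icc_self ht) ht.1
  have hψb : ∀ t ∈ Icc 0 b, ψ t ≤ ψ b := fun t ht =>
    hψmono.monotoneOn ht ⟨hb.le, le_rfl⟩ ht.2
  have hlow : ∀ τ ∈ Ioc 0 b, ζ * τ ≤ ψ τ - ψ 0 := fun τ hτ => by
    simpa using mul_sub_le_image_sub_of_le_hasDerivAt hψc hψd
      (fun x hx => hζψ x (Ioo_subset_Icc_self hx)) ⟨le_rfl, hb.le⟩ (Ioc_subset_Icc_self hτ) hτ.1.le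
  obtain ⟨Wu, hWuc, hWu⟩ := huw
  obtain ⟨Wv, hWvc, hWv⟩ := hvw
  set E := exp (δ * (ψ b - ψ 0))
  set N := bnorm ψ γ δ b (fun t => u t - v t)
  have hEN : 0 ≤ E * N := mul_nonneg (exp_pos _).le bnorm_nonneg
  have huv : ∀ τ ∈ Ioc 0 b, |u τ - v τ| ≤ E * N * (ψ τ - ψ 0) ^ (γ - 1) := fun τ hτ =>
    abs_le_bnorm (ω := fun t => u t - v t) hψc
      ⟨Wu - Wv, hWuc.sub hWvc, fun t ht => by simp [hWu t ht, hWv t ht, mul_sub]⟩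
      hδ hτ (hψ0 τ hτ) (hψb τ (Ioc_subset_Icc_self hτ))
  have hsub : Icc 0 b ⊆ Icc (-r) b := Icc_subset_Icc_left (by linarith)
  have hgb : MapsTo g (Icc 0 b) (Icc (-r) b) := fun τ hτ =>
    ⟨(hgmem τ hτ).1, (hgmem τ hτ).2.trans hb.le⟩
  have hg : ∀ τ ∈ Icc 0 b, u (g τ) = v (g τ) := fun τ hτ =>
    (huφ _ (hgmem τ hτ)).trans (hvφ _ (hgmem τ hτ)).symm
  suffices hX : bnorm ψ γ δ b (fun t => Gf ψ ψ' α γ u₀ φ f h g u t - Gf ψ ψ' α γ u₀ φ f h g v t)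
      ≤ Lf * (E * N) * ((Gamma γ / Gamma (γ + α)) * (ψ b - ψ 0) ^ α
        + Lh / (ζ * γ) * (Gamma (γ + 1) / Gamma (γ + α + 1)) * (ψ b - ψ 0) ^ (α + 1)) by
    linarith [bnorm_nonneg.trans hX]
  refine bnorm_le hb hδ (fun t ht => (hψ0 t ht).le) fun t ht => ?_
  calc _ ≤ Lf * (E * N) * ((Gamma γ / Gamma (γ + α)) * (ψ t - ψ 0) ^ α
          + Lh / (ζ * γ) * (Gamma (γ + 1) / Gamma (γ + α + 1)) * (ψ t - ψ 0) ^ (α + 1)) :=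
        rpow_mul_abs_Gf_sub_le ht hψc hψd (fun x hx => (hψ'pos x (Ioo_subset_Icc_self hx)).le)
          hψmono.monotoneOn (hψ0 t ht) hα0 hγ0
          (continuousOn_Ffun hf hh (hu.mono hsub) (hu.comp hgc hgb))
          (continuousOn_Ffun hf hh (hv.mono hsub) (hv.comp hgc hgb)) fun s hs => by
            simpa only [mul_assoc] using abs_Ffun_sub_le_rpow hs hLf.le hLh.le hEN hζ hγ0 hγ1
              hh hfLip hhLip (hu.mono hsub) (hu.comp hgc hgb) (hv.mono hsub) (hv.comp hgc hgb)
              hg hlow huv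
    _ ≤ _ := by
        have := sub_pos.2 (hψ0 t ht)
        have := hψb t (Ioc_subset_Icc_self ht)
        gcongr

/-- Bielecki-norm contraction estimate for the solution operator. -/
theorem Gf_bielecki_contraction_estimate
    (b r : ℝ) (hb : 0 < b) (hr : 0 < r) (ψ ψ' : ℝ → ℝ)
    (hψ : ∀ t ∈ Icc (0:ℝ) b, HasDerivWithinAt ψ (ψ' t) (Icc (0:ℝ) b) t)
    (hψ'c : ContinuousOn ψ' (Icc (0:ℝ) b))
    (hψ'pos : ∀ t ∈ Icc (0:ℝ) b, 0 < ψ' t)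
    (hψmono : StrictMonoOn ψ (Icc (0:ℝ) b))
    (α β γ : ℝ) (hα0 : 0 < α) (hα1 : α < 1) (hβ0 : 0 ≤ β) (hβ1 : β ≤ 1)
    (hγ : γ = α + β * (1 - α)) (u₀ : ℝ)
    (φ : ℝ → ℝ) (hφ : ContinuousOn φ (Icc (-r) 0))
    (f h : ℝ → ℝ → ℝ → ℝ → ℝ) (g : ℝ → ℝ)
    -- (H1)
    (hgc : ContinuousOn g (Icc (0:ℝ) b))
    (hgmem : ∀ t ∈ Icc (0:ℝ) b, g t ∈ Icc (-r) 0)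
    (hgle : ∀ t ∈ Icc (0:ℝ) b, g t ≤ t)
    -- (H2)
    (hf : ContinuousOn (fun p : ℝ × ℝ × ℝ × ℝ => f p.1 p.2.1 p.2.2.1 p.2.2.2)
      (Icc (0:ℝ) b ×ˢ (univ : Set (ℝ × ℝ × ℝ))))
    (hh : ContinuousOn (fun p : ℝ × ℝ × ℝ × ℝ => h p.1 p.2.1 p.2.2.1 p.2.2.2)
      (Icc (0:ℝ) b ×ˢ Icc (0:ℝ) b ×ˢ (univ : Set (ℝ × ℝ))))
    (Lf Lh : ℝ) (hLf : 0 < Lf) (hLh : 0 < Lh)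
    (hfLip : ∀ t ∈ Icc (0:ℝ) b, ∀ u₁ u₂ u₃ v₁ v₂ v₃ : ℝ,
      |f t u₁ u₂ u₃ - f t v₁ v₂ v₃| ≤ Lf * (|u₁ - v₁| + |u₂ - v₂| + |u₃ - v₃|))
    (hhLip : ∀ t ∈ Icc (0:ℝ) b, ∀ s ∈ Icc (0:ℝ) b, ∀ u₁ u₂ v₁ v₂ : ℝ,
      |h t s u₁ u₂ - h t s v₁ v₂| ≤ Lh * (|u₁ - v₁| + |u₂ - v₂|))
    -- ζ is a positive lower bound for ψ', δ is the Bielecki parameter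
    (ζ : ℝ) (hζ : 0 < ζ) (hζψ : ∀ s ∈ Icc (0:ℝ) b, ζ ≤ ψ' s)
    (δ : ℝ) (hδ : 0 ≤ δ)
    -- u, v as in the statement
    (u v : ℝ → ℝ)
    (hu : ContinuousOn u (Icc (-r) b)) (hv : ContinuousOn v (Icc (-r) b))
    (huφ : ∀ t ∈ Icc (-r) 0, u t = φ t) (hvφ : ∀ t ∈ Icc (-r) 0, v t = φ t)
    (huw : ∃ W : ℝ → ℝ, ContinuousOn W (Icc (0:ℝ) b) ∧
      ∀ t ∈ Ioc (0:ℝ) b, W t = (ψ t - ψ 0) ^ (1 - γ) * u t)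
    (hvw : ∃ W : ℝ → ℝ, ContinuousOn W (Icc (0:ℝ) b) ∧
      ∀ t ∈ Ioc (0:ℝ) b, W t = (ψ t - ψ 0) ^ (1 - γ) * v t) :
    bnorm ψ γ δ b (fun t => Gf ψ ψ' α γ u₀ φ f h g u t - Gf ψ ψ' α γ u₀ φ f h g v t)
      ≤ 2 * Lf * Real.exp (δ * (ψ b - ψ 0))
          * ((Real.Gamma γ / Real.Gamma (γ + α)) * (ψ b - ψ 0) ^ α
            + (Lh / (ζ * γ)) * (Real.Gamma (γ + 1) / Real.Gamma (γ + α + 1))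
              * (ψ b - ψ 0) ^ (α + 1))
        * bnorm ψ γ δ b (fun t => u t - v t) :=
  Gf_bielecki_contraction_estimate_general b r hb hr ψ ψ' hψ hψ'pos hψmono α β γ hα0 hα1 hβ0 hβ1 hγ
    u₀ φ f h g hgc hgmem hf hh Lf Lh hLf hLh hfLip hhLip ζ hζ hζψ δ hδ u v hu hv huφ hvφ huw hvw
end

section
/- Weighted exponential kernel estimate J₁ (inequality (R1)): let 0 < α < 1, 0 < γ ≤ 1, δ ≥ 0. Then for every t ∈ (0,b], (1/Γ(α)) ∫₀ᵗ ψ'(s)(ψ(t)−ψ(s))^{α−1} e^{δ(ψ(s)−ψ(0))} (ψ(s)−ψ(0))^{γ−1} ds ≤ e^{δ(ψ(b)−ψ(0))} (Γ(γ)/Γ(γ+α)) (ψ(t)−ψ(0))^{α+γ−1}. -/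
/-!
Substituting `x = ψ s` turns the integral into
`∫_{ψ 0}^{ψ t} e^{δ(x - ψ 0)} (x - ψ 0)^{γ-1} (ψ t - x)^{α-1} dx`.
Bounding the exponential by its value at `ψ b` leaves a Beta integral over `[ψ 0, ψ t]`, which
equals `(ψ t - ψ 0)^{γ+α-1} Γ(γ) Γ(α) / Γ(γ+α)`.
-/

open Real MeasureTheory Set ProbabilityTheory

theorem integral_comp_smul_deriv_of_monotoneOn {E : Type*} [NormedAddCommGroup E]
    [NormedSpace ℝ E] {f f' : ℝ → ℝ} {a b : ℝ} (hab : a ≤ b)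
    (hf : ∀ x ∈ Icc a b, HasDerivWithinAt f (f' x) (Icc a b) x) (hmono : MonotoneOn f (Icc a b))
    (g : ℝ → E) :
    ∫ x in a..b, f' x • g (f x) = ∫ y in f a..f b, g y := by
  have hcont : ContinuousOn f (Icc a b) := fun x hx => (hf x hx).continuousWithinAt
  rw [intervalIntegral.integral_of_le hab,
    intervalIntegral.integral_of_le (hmono (left_mem_Icc.2 hab) (right_mem_Icc.2 hab) hab),
    ← integral_Icc_eq_integral_Ioc, ← integral_Icc_eq_integral_Ioc,
    ← hcont.image_Icc_of_monotoneOn hab hmono,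
    integral_image_eq_integral_deriv_smul_of_monotoneOn measurableSet_Icc hf hmono]

theorem integral_rpow_mul_one_sub_rpow {u v : ℝ} (hu : 0 < u) (hv : 0 < v) :
    ∫ x in (0:ℝ)..1, x ^ (u - 1) * (1 - x) ^ (v - 1) = beta u v := by
  rw [beta_eq_betaIntegralReal u v hu hv, Complex.betaIntegral, ← Complex.ofReal_re
    (∫ x in (0:ℝ)..1, x ^ (u - 1) * (1 - x) ^ (v - 1)), ← intervalIntegral.integral_ofReal]
  congr 1
  refine intervalIntegral.integral_congr fun x hx => ?_
  rw [uIcc_of_le zero_le_one] at hx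
  push_cast
  rw [Complex.ofReal_cpow hx.1, Complex.ofReal_cpow (sub_nonneg.2 hx.2)]
  push_cast
  rfl

theorem integral_sub_rpow_mul_sub_rpow {u v c d : ℝ} (hu : 0 < u) (hv : 0 < v) (hcd : c < d) :
    ∫ x in c..d, (x - c) ^ (u - 1) * (d - x) ^ (v - 1) = (d - c) ^ (u + v - 1) * beta u v := by
  have hdc : 0 < d - c := sub_pos.2 hcd
  calc ∫ x in c..d, (x - c) ^ (u - 1) * (d - x) ^ (v - 1)
      = (d - c) • ∫ y in (0:ℝ)..1,
          ((d - c) * y + c - c) ^ (u - 1) * (d - ((d - c) * y + c)) ^ (v - 1) := by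
        have h := intervalIntegral.smul_integral_comp_mul_add (a := 0) (b := 1)
          (fun x => (x - c) ^ (u - 1) * (d - x) ^ (v - 1)) (d - c) c
        simp only [mul_zero, zero_add, mul_one, sub_add_cancel] at h
        exact h.symm
    _ = (d - c) * ∫ y in (0:ℝ)..1,
          (d - c) ^ (u - 1) * (d - c) ^ (v - 1) * (y ^ (u - 1) * (1 - y) ^ (v - 1)) := by
        rw [smul_eq_mul]
        congr 1
        refine intervalIntegral.integral_congr fun y hy => ?_
        rw [uIcc_of_le zero_le_one] at hy
        rw [show (d - c) * y + c - c = (d - c) * y by ring,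
          show d - ((d - c) * y + c) = (d - c) * (1 - y) by ring,
          mul_rpow hdc.le hy.1, mul_rpow hdc.le (sub_nonneg.2 hy.2)]
        ring
    _ = (d - c) ^ (u + v - 1) * beta u v := by
        rw [intervalIntegral.integral_const_mul, integral_rpow_mul_one_sub_rpow hu hv,
          show u + v - 1 = (u - 1) + (v - 1) + 1 by ring, rpow_add_one hdc.ne', rpow_add hdc]
        ring

theorem intervalIntegrable_sub_rpow_mul_sub_rpow {u v c d : ℝ} (hu : 0 < u) (hv : 0 < v)
    (hcd : c < d) :
    IntervalIntegrable (fun x => (x - c) ^ (u - 1) * (d - x) ^ (v - 1)) volume c d := by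
  refine intervalIntegral.intervalIntegrable_of_integral_ne_zero ?_
  rw [integral_sub_rpow_mul_sub_rpow hu hv hcd]
  exact (mul_pos (rpow_pos_of_pos (sub_pos.2 hcd) _) (beta_pos hu hv)).ne'

theorem integral_exp_mul_sub_rpow_mul_sub_rpow_le {u v c d M δ : ℝ} (hu : 0 < u) (hv : 0 < v)
    (hcd : c < d) (hdM : d ≤ M) (hδ : 0 ≤ δ) :
    ∫ x in c..d, exp (δ * (x - c)) * ((x - c) ^ (u - 1) * (d - x) ^ (v - 1))
      ≤ exp (δ * (M - c)) * ((d - c) ^ (u + v - 1) * beta u v) := by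
  have hK := intervalIntegrable_sub_rpow_mul_sub_rpow hu hv hcd
  rw [← integral_sub_rpow_mul_sub_rpow hu hv hcd, ← intervalIntegral.integral_const_mul]
  refine intervalIntegral.integral_mono_on hcd.le
    (hK.continuousOn_mul (by fun_prop)) (hK.const_mul _) fun x hx => ?_
  have hexp : exp (δ * (x - c)) ≤ exp (δ * (M - c)) := by
    gcongr
    exact hx.2.trans hdM
  have hkernel : 0 ≤ (x - c) ^ (u - 1) * (d - x) ^ (v - 1) :=
    mul_nonneg (rpow_nonneg (sub_nonneg.2 hx.1) _) (rpow_nonneg (sub_nonneg.2 hx.2) _)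
  exact mul_le_mul_of_nonneg_right hexp hkernel

theorem weighted_exp_kernel_estimate_J1_general
    (b : ℝ) (ψ ψ' : ℝ → ℝ)
    (hψ : ∀ t ∈ Icc (0:ℝ) b, HasDerivWithinAt ψ (ψ' t) (Icc (0:ℝ) b) t)
    (hψmono : StrictMonoOn ψ (Icc (0:ℝ) b))
    (α γ δ : ℝ) (hα0 : 0 < α) (hγ0 : 0 < γ) (hδ : 0 ≤ δ) :
    ∀ t ∈ Ioc (0:ℝ) b,
      (Real.Gamma α)⁻¹
          * ∫ s in (0:ℝ)..t, ψ' s * (ψ t - ψ s) ^ (α - 1)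
              * (Real.exp (δ * (ψ s - ψ 0)) * (ψ s - ψ 0) ^ (γ - 1))
        ≤ Real.exp (δ * (ψ b - ψ 0)) * (Real.Gamma γ / Real.Gamma (γ + α))
            * (ψ t - ψ 0) ^ (α + γ - 1) := by
  rintro t ⟨ht0, htb⟩
  have h0 : (0:ℝ) ∈ Icc 0 b := ⟨le_rfl, ht0.le.trans htb⟩
  have ht : t ∈ Icc 0 b := ⟨ht0.le, htb⟩
  have hb : b ∈ Icc 0 b := ⟨ht0.le.trans htb, le_rfl⟩
  have hsub : Icc 0 t ⊆ Icc 0 b := Icc_subset_Icc_right htb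
  have hsubst : ∫ s in (0:ℝ)..t, ψ' s * (ψ t - ψ s) ^ (α - 1)
        * (exp (δ * (ψ s - ψ 0)) * (ψ s - ψ 0) ^ (γ - 1))
      = ∫ x in ψ 0..ψ t,
          exp (δ * (x - ψ 0)) * ((x - ψ 0) ^ (γ - 1) * (ψ t - x) ^ (α - 1)) := by
    rw [← integral_comp_smul_deriv_of_monotoneOn ht0.le
      (fun x hx => (hψ x (hsub hx)).mono hsub) (hψmono.monotoneOn.mono hsub)]
    refine intervalIntegral.integral_congr fun s _ => ?_
    simp only [smul_eq_mul]
    ring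
  have hbound := integral_exp_mul_sub_rpow_mul_sub_rpow_le hγ0 hα0 (hψmono h0 ht ht0)
    (hψmono.monotoneOn ht hb htb) hδ
  have hΓα := Gamma_pos_of_pos hα0
  rw [hsubst]
  calc (Gamma α)⁻¹ * _ ≤ (Gamma α)⁻¹ * (exp (δ * (ψ b - ψ 0))
        * ((ψ t - ψ 0) ^ (γ + α - 1) * beta γ α)) := by gcongr
    _ = _ := by
        rw [beta, add_comm α γ]
        field_simp

/-- Weighted exponential kernel estimate J₁ (inequality (R1)). -/
theorem weighted_exp_kernel_estimate_J1
    (b : ℝ) (hb : 0 < b) (ψ ψ' : ℝ → ℝ)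
    (hψ : ∀ t ∈ Icc (0:ℝ) b, HasDerivWithinAt ψ (ψ' t) (Icc (0:ℝ) b) t)
    (hψ'c : ContinuousOn ψ' (Icc (0:ℝ) b))
    (hψ'pos : ∀ t ∈ Icc (0:ℝ) b, 0 < ψ' t)
    (hψmono : StrictMonoOn ψ (Icc (0:ℝ) b))
    (α γ δ : ℝ) (hα0 : 0 < α) (hα1 : α < 1) (hγ0 : 0 < γ) (hγ1 : γ ≤ 1) (hδ : 0 ≤ δ) :
    ∀ t ∈ Ioc (0:ℝ) b,
      (Real.Gamma α)⁻¹
          * ∫ s in (0:ℝ)..t, ψ' s * (ψ t - ψ s) ^ (α - 1)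
              * (Real.exp (δ * (ψ s - ψ 0)) * (ψ s - ψ 0) ^ (γ - 1))
        ≤ Real.exp (δ * (ψ b - ψ 0)) * (Real.Gamma γ / Real.Gamma (γ + α))
            * (ψ t - ψ 0) ^ (α + γ - 1) :=
  weighted_exp_kernel_estimate_J1_general b ψ ψ' hψ hψmono α γ δ hα0 hγ0 hδ
end
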